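/- Assume L ⊆ Σ^ω is recognized by some deterministic co-Büchi automaton. For every pair (u,v) of finite words: θ(u,v) is a singleton if and only if (u,v) is pointed. -/

import Mathlib

open Classical

/-- Rank of a transition in a co-Büchi automaton: `one` or `two`. -/
inductive Rk | one | two
deriving DecidableEq

/-- A co-Büchi automaton over alphabet `A` with state type `Q`:
initial states and a transition relation where each transition carries a rank. -/
structure CoBuchi (A : Type) (Q : Type) where
  init : Set Q
  delta : Set (Q × A × Rk × Q)

namespace CoBuchi

variable {A Q : Type}

/-- Every state has an outgoing transition on every letter. -/
def Total (M : CoBuchi A Q) : Prop :=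
  ∀ q a, ∃ r q', (q, a, r, q') ∈ M.delta

/-- The prefix `α[0..n-1]` of an infinite word. -/
def prefW (α : ℕ → A) (n : ℕ) : List A := (List.range n).map α

/-- The infinite word `a·w`. -/
def consW (a : A) (w : ℕ → A) : ℕ → A := fun n => match n with
  | 0 => a
  | Nat.succ k => w k

/-- `L(M,q)`: infinite words having a run from `q` with only finitely many rank-1
transitions. -/
def LangFrom (M : CoBuchi A Q) (q : Q) : Set (ℕ → A) :=
  { w | ∃ (ρ : ℕ → Q) (r : ℕ → Rk), ρ 0 = q ∧
        (∀ n, (ρ n, w n, r n, ρ (n + 1)) ∈ M.delta) ∧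
        ∃ N, ∀ n, N ≤ n → r n = Rk.two }

/-- `L(M)`: the language of the automaton. -/
def Lang (M : CoBuchi A Q) : Set (ℕ → A) :=
  { w | ∃ q ∈ M.init, w ∈ M.LangFrom q }

/-- `q →₂^w q'`: a finite run from `q` to `q'` on `w` using only rank-2 transitions. -/
def SafeReach (M : CoBuchi A Q) : Q → List A → Q → Prop
  | q, [], q' => q = q'
  | q, a :: w, q' => ∃ p, (q, a, Rk.two, p) ∈ M.delta ∧ SafeReach M p w q'

/-- A finite run from `q` to `q'` on `w` using transitions of any rank. -/
def Reach (M : CoBuchi A Q) : Q → List A → Q → Prop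
  | q, [], q' => q = q'
  | q, a :: w, q' => ∃ r p, (q, a, r, p) ∈ M.delta ∧ Reach M p w q'

/-- Safe language of a state. -/
def Lsf (M : CoBuchi A Q) (q : Q) : Set (List A) := { w | ∃ q', M.SafeReach q w q' }

/-- Semantically-deterministic: every transition respects residuals. -/
def SemDet (M : CoBuchi A Q) : Prop :=
  ∀ p a rk q, (p, a, rk, q) ∈ M.delta →
    M.LangFrom q = { w | consW a w ∈ M.LangFrom p }

/-- Unsafe-saturated: all residual-respecting rank-1 transitions are present. -/
def UnsafeSat (M : CoBuchi A Q) : Prop :=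
  ∀ p a q, M.LangFrom q = { w | consW a w ∈ M.LangFrom p } →
    (p, a, Rk.one, q) ∈ M.delta

/-- Safe-deterministic: at most one rank-2 transition per state and letter. -/
def SafeDet (M : CoBuchi A Q) : Prop :=
  ∀ p a q q', (p, a, Rk.two, q) ∈ M.delta → (p, a, Rk.two, q') ∈ M.delta → q = q'

/-- Normalized: every rank-2 transition can be completed to a rank-2 loop. -/
def Normalized (M : CoBuchi A Q) : Prop :=
  ∀ q a q', (q, a, Rk.two, q') ∈ M.delta → ∃ x, M.SafeReach q' x q

/-- Deterministic: one initial state, exactly one transition per state and letter. -/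
def Deterministic (M : CoBuchi A Q) : Prop :=
  (∃! q, q ∈ M.init) ∧ ∀ p a, ∃! t : Rk × Q, (p, a, t.1, t.2) ∈ M.delta

/-- History-deterministic: a strategy `σ : Σ* → Q` resolving the nondeterminism,
whose run on every `α ∈ L(M)` can be ranked with finitely many rank-1 transitions. -/
def HistoryDet (M : CoBuchi A Q) : Prop :=
  ∃ σ : List A → Q, σ [] ∈ M.init ∧
    (∀ w a, ∃ rk, (σ w, a, rk, σ (w ++ [a])) ∈ M.delta) ∧
    ∀ α ∈ M.Lang, ∃ r : ℕ → Rk,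
      (∀ n, (σ (prefW α n), α n, r n, σ (prefW α (n + 1))) ∈ M.delta) ∧
      ∃ N, ∀ n, N ≤ n → r n = Rk.two

/-- `q` and `q'` are in the same safe SCC (mutually reachable via rank-2 runs). -/
def SameSafeSCC (M : CoBuchi A Q) (q q' : Q) : Prop :=
  (∃ x, M.SafeReach q x q') ∧ (∃ y, M.SafeReach q' y q)

end CoBuchi

section LangDefs

variable {A : Type} [Nonempty A]

/-- The infinite word `u·w`. -/
def appW (u : List A) (w : ℕ → A) : ℕ → A :=
  fun n => if h : n < u.length then u.get ⟨n, h⟩ else w (n - u.length)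

/-- The infinite word `v^ω` (arbitrary if `v = ε`). -/
noncomputable def iterW (v : List A) : ℕ → A :=
  fun n =>
    if h : v = [] then Classical.arbitrary A
    else v.get ⟨n % v.length, Nat.mod_lt _ (List.length_pos_iff.mpr h)⟩

/-- The ultimately periodic word `u v^ω`. -/
noncomputable def upW (u v : List A) : ℕ → A := appW u (iterW v)

/-- The right congruence `u ∼_L v`. -/
def SimL (L : Set (ℕ → A)) (u v : List A) : Prop :=
  ∀ w : ℕ → A, appW u w ∈ L ↔ appW v w ∈ L

/-- `(u,v) ≈_L ⊥`: `v ≠ ε` and `u(vx)^ω ∉ L` for all `x` with `uvx ∼_L u`. -/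
def ApproxBot (L : Set (ℕ → A)) (u v : List A) : Prop :=
  v ≠ [] ∧ ∀ x : List A, SimL L (u ++ v ++ x) u → upW u (v ++ x) ∉ L

/-- The safe language of a pair: `sfl(u,v) = {x | (u,vx) not ≈_L ⊥}`. -/
def Sfl (L : Set (ℕ → A)) (u v : List A) : Set (List A) :=
  { x | ¬ ApproxBot L u (v ++ x) }

/-- `(u,v) ≡_L (u',v')`. -/
def EquivL (L : Set (ℕ → A)) (u v u' v' : List A) : Prop :=
  SimL L (u ++ v) (u' ++ v') ∧ Sfl L u v = Sfl L u' v'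

/-- `(u,v)` is pointed. -/
def IsPointed (L : Set (ℕ → A)) (u v : List A) : Prop :=
  ¬ ApproxBot L u v ∧
    ∀ u₁ u₂ : List A, SimL L (u₁ ++ u₂) u → ¬ ApproxBot L u₁ (u₂ ++ v) →
      Sfl L u v = Sfl L u₁ (u₂ ++ v)

/-- `(u,v) ≈_L (u',v')` (for pairs with nonempty second components). -/
def ApproxL (L : Set (ℕ → A)) (u v u' v' : List A) : Prop :=
  SimL L u u' ∧ SimL L (u ++ v) (u' ++ v') ∧
    ∀ x : List A, SimL L (u ++ v ++ x) u →
      (upW u (v ++ x) ∈ L ↔ upW u' (v' ++ x) ∈ L)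

/-- `L` is recognized by some (total) deterministic co-Büchi automaton. -/
def DCWRecognizable (L : Set (ℕ → A)) : Prop :=
  ∃ (Q : Type) (_ : Fintype Q) (M : CoBuchi A Q), M.Deterministic ∧ M.Lang = L

/-- IsPointed pairs. -/
def PointedPair (L : Set (ℕ → A)) : Type :=
  { p : List A × List A // IsPointed L p.1 p.2 }

/-- `≡_L` as a setoid on all pairs. -/
def equivLSetoid (L : Set (ℕ → A)) : Setoid (List A × List A) where
  r p q := EquivL L p.1 p.2 q.1 q.2
  iseqv := {
    refl := fun p => ⟨fun w => Iff.rfl, rfl⟩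
    symm := fun h => ⟨fun w => (h.1 w).symm, h.2.symm⟩
    trans := fun h g => ⟨fun w => (h.1 w).trans (g.1 w), h.2.trans g.2⟩ }

/-- `≡_L` as a setoid on pointed pairs. -/
def canonSetoid (L : Set (ℕ → A)) : Setoid (PointedPair L) where
  r p q := EquivL L p.1.1 p.1.2 q.1.1 q.1.2
  iseqv := {
    refl := fun p => ⟨fun w => Iff.rfl, rfl⟩
    symm := fun h => ⟨fun w => (h.1 w).symm, h.2.symm⟩
    trans := fun h g => ⟨fun w => (h.1 w).trans (g.1 w), h.2.trans g.2⟩ }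

/-- States of the canonical automaton: `≡_L`-classes of pointed pairs. -/
def CanonState (L : Set (ℕ → A)) : Type := Quotient (canonSetoid L)

/-- The class `⟦u,v⟧` of a pointed pair. -/
def cls (L : Set (ℕ → A)) (u v : List A) (h : IsPointed L u v) : CanonState L :=
  Quotient.mk (canonSetoid L) ⟨(u, v), h⟩

/-- The canonical automaton `A_{≡_L}`. -/
def canonAut (L : Set (ℕ → A)) : CoBuchi A (CanonState L) where
  init := { s | ∃ (u v : List A) (h : IsPointed L u v),
              s = cls L u v h ∧ SimL L (u ++ v) [] }
  delta := { t |
    (∃ (u v : List A) (h : IsPointed L u v) (h' : IsPointed L u (v ++ [t.2.1])),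
        ¬ ApproxBot L u (v ++ [t.2.1]) ∧
        t.1 = cls L u v h ∧ t.2.2.1 = Rk.two ∧
        t.2.2.2 = cls L u (v ++ [t.2.1]) h') ∨
    (∃ (u v u' v' : List A) (h : IsPointed L u v) (h' : IsPointed L u' v'),
        SimL L (u ++ v ++ [t.2.1]) (u' ++ v') ∧
        t.1 = cls L u v h ∧ t.2.2.1 = Rk.one ∧ t.2.2.2 = cls L u' v' h') }

/-- `θ(u,v)`: states of `A_{≡_L}` reachable by reading `u` from an initial state
(any ranks) and then `v` via rank-2 transitions only. -/
def theta (L : Set (ℕ → A)) (u v : List A) : Set (CanonState L) :=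
  { q | ∃ p₀ ∈ (canonAut L).init, ∃ p,
          (canonAut L).Reach p₀ u p ∧ (canonAut L).SafeReach p v q }

/-- `(u,v)` is supported: `θ(u,v) ≠ ∅`. -/
def Supported (L : Set (ℕ → A)) (u v : List A) : Prop := (theta L u v).Nonempty

/-- `(u,v)` is double-supported: two distinct states of `θ(u,v)` in the same safe SCC. -/
def DoubleSupported (L : Set (ℕ → A)) (u v : List A) : Prop :=
  ∃ q ∈ theta L u v, ∃ q' ∈ theta L u v, q ≠ q' ∧ (canonAut L).SameSafeSCC q q'

/-- `(u,v)` is single-supported. -/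
def SingleSupported (L : Set (ℕ → A)) (u v : List A) : Prop :=
  Supported L u v ∧ ¬ DoubleSupported L u v

/-- `w` concatenated with itself `m` times. -/
def repCat (w : List A) : ℕ → List A
  | 0 => []
  | Nat.succ m => w ++ repCat w m


/-!
For a deterministic co-Büchi automaton, `sfl(x,y)` depends only on the state reached on `x` and on
the profile of `y` (emptiness of `y`, and for every start state the state reached on `y` and
whether that run is safe). So there are finitely many safe languages, and descending along `⊆`
always terminates in a pointed pair. Combined with the pumping of a safe loop, this gives: if
`u₁u₂ ∼ u` and `u₂v ∈ sfl(u₁,ε)`, there is a pointed `(x,y)` with `xy ∼ u`, `yv` safe after `x`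
and `sfl(x,yv) ⊆ sfl(u₁,u₂v)`.

In `A_{≡_L}`, the states reached on `u` are the classes `⟦x,y⟧` of pointed pairs with `xy ∼ u`,
and since pointedness survives safe extensions, rank-2 runs on `v` lead from `⟦x,y⟧` exactly to
`⟦x,yv⟧`. If `(u,v)` is pointed, all these classes equal `⟦u,v⟧`. Conversely, if
`θ(u,v) = {q}`, the state obtained from a decomposition `u₁u₂ ∼ u` and the state obtained from
any `t ∈ sfl(u,v)` are both `q`, which gives `sfl(u,v) ⊆ sfl(u₁,u₂v)`.
-/

section Words

variable {A : Type}

theorem appW_nil (α : ℕ → A) : appW [] α = α := by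
  funext n
  simp [appW]

theorem appW_of_lt {u : List A} (α : ℕ → A) {n : ℕ} (h : n < u.length) : appW u α n = u[n] := by
  simp [appW, h]

theorem appW_of_le {u : List A} (α : ℕ → A) {n : ℕ} (h : u.length ≤ n) :
    appW u α n = α (n - u.length) := by
  simp [appW, Nat.not_lt_of_ge h]

theorem appW_append (u v : List A) (α : ℕ → A) : appW (u ++ v) α = appW u (appW v α) := by
  funext n
  rcases lt_or_ge n u.length with hu | hu
  · rw [appW_of_lt _ (by simp; omega), appW_of_lt _ hu, List.getElem_append_left hu]
  · rw [appW_of_le _ hu]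
    rcases lt_or_ge n (u.length + v.length) with huv | huv
    · rw [appW_of_lt _ (by simpa using huv), appW_of_lt _ (by omega),
        List.getElem_append_right hu]
    · rw [appW_of_le _ (by simpa using huv), appW_of_le _ (by omega), List.length_append,
        Nat.sub_sub]

theorem appW_cons_succ (a : A) (u : List A) (α : ℕ → A) :
    (fun i => appW (a :: u) α (i + 1)) = appW u α := by
  funext i
  simp [appW]

theorem repCat_succ (w : List A) (n : ℕ) : repCat w (n + 1) = w ++ repCat w n := rfl

theorem repCat_nil (n : ℕ) : repCat ([] : List A) n = [] := by
  induction n with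
  | zero => rfl
  | succ n ih => simp [repCat_succ, ih]

theorem repCat_add (w : List A) (m n : ℕ) : repCat w (m + n) = repCat w m ++ repCat w n := by
  induction m with
  | zero => simp [repCat]
  | succ m ih => rw [Nat.add_right_comm, repCat_succ, repCat_succ, ih, List.append_assoc]

theorem repCat_succ' (w : List A) (n : ℕ) : repCat w (n + 1) = repCat w n ++ w := by
  rw [repCat_add]
  simp [repCat]

theorem repCat_length (w : List A) (n : ℕ) : (repCat w n).length = n * w.length := by
  induction n with
  | zero => simp [repCat]
  | succ n ih => simp [repCat_succ, ih, Nat.succ_mul, Nat.add_comm]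

theorem repCat_prefix (w : List A) {m n : ℕ} (h : m ≤ n) : repCat w m <+: repCat w n := by
  obtain ⟨k, rfl⟩ := Nat.exists_eq_add_of_le h
  rw [repCat_add]
  exact List.prefix_append _ _

theorem append_repCat_comm (a b : List A) (n : ℕ) :
    a ++ repCat (b ++ a) n = repCat (a ++ b) n ++ a := by
  induction n with
  | zero => simp [repCat]
  | succ n ih => simp only [repCat_succ, List.append_assoc, ih]

end Words

section Periodic

variable {A : Type} [Nonempty A]

theorem iterW_of_ne_nil {s : List A} (hs : s ≠ []) (n : ℕ) :
    iterW s n = s[n % s.length]'(Nat.mod_lt _ (List.length_pos_iff.mpr hs)) := by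
  simp [iterW, hs]

theorem appW_iterW {s : List A} (hs : s ≠ []) : appW s (iterW s) = iterW s := by
  funext n
  rcases lt_or_ge n s.length with h | h
  · simp only [appW_of_lt _ h, iterW_of_ne_nil hs, Nat.mod_eq_of_lt h]
  · simp only [appW_of_le _ h, iterW_of_ne_nil hs, ← Nat.mod_eq_sub_mod h]

theorem eq_iterW_of_appW_eq {s : List A} (hs : s ≠ []) {β : ℕ → A} (h : appW s β = β) :
    β = iterW s := by
  have hpos : 0 < s.length := List.length_pos_iff.mpr hs
  funext n
  induction n using Nat.strong_induction_on with
  | _ n ih =>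
    rw [← h, ← appW_iterW hs]
    rcases lt_or_ge n s.length with hn | hn
    · rw [appW_of_lt _ hn, appW_of_lt _ hn]
    · rw [appW_of_le _ hn, appW_of_le _ hn, ih _ (by omega)]

theorem appW_repCat_iterW (s : List A) (n : ℕ) : appW (repCat s n) (iterW s) = iterW s := by
  rcases eq_or_ne s [] with rfl | hs
  · rw [repCat_nil, appW_nil]
  induction n with
  | zero => exact appW_nil _
  | succ n ih => rw [repCat_succ, appW_append, ih, appW_iterW hs]

theorem iterW_repCat (s : List A) (n : ℕ) : iterW (repCat s (n + 1)) = iterW s := by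
  rcases eq_or_ne s [] with rfl | hs
  · rw [repCat_nil]
  · exact (eq_iterW_of_appW_eq (List.append_ne_nil_of_left_ne_nil hs _)
      (appW_repCat_iterW s (n + 1))).symm

theorem appW_iterW_rotate {a b : List A} (h : b ++ a ≠ []) :
    appW a (iterW (b ++ a)) = iterW (a ++ b) := by
  refine eq_iterW_of_appW_eq (fun hab => h ?_) ?_
  · obtain ⟨rfl, rfl⟩ := List.append_eq_nil_iff.mp hab
    rfl
  · rw [appW_append, ← appW_append b, appW_iterW h]

end Periodic

namespace SimL

variable {A : Type} {L : Set (ℕ → A)}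

theorem refl (u : List A) : SimL L u u := fun _ => Iff.rfl

theorem symm {u v : List A} (h : SimL L u v) : SimL L v u := fun w => (h w).symm

theorem trans {u v x : List A} (h : SimL L u v) (h' : SimL L v x) : SimL L u x :=
  fun w => (h w).trans (h' w)

theorem append_right {u v : List A} (h : SimL L u v) (z : List A) : SimL L (u ++ z) (v ++ z) := by
  intro w
  rw [appW_append, appW_append]
  exact h _

theorem append_repCat {u w : List A} (h : SimL L (u ++ w) u) (n : ℕ) :
    SimL L (u ++ repCat w n) u := by
  induction n with
  | zero => simpa [repCat] using refl u
  | succ n ih =>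
    rw [repCat_succ, ← List.append_assoc]
    exact (h.append_right _).trans ih

end SimL

section Semantics

variable {A : Type} [Nonempty A] {L : Set (ℕ → A)}

theorem not_approxBot_iff {u s : List A} :
    ¬ ApproxBot L u s ↔ s = [] ∨ ∃ z, SimL L (u ++ s ++ z) u ∧ upW u (s ++ z) ∈ L := by
  simp only [ApproxBot, not_and_or, not_forall, not_not, exists_prop]

theorem not_approxBot_nil (u : List A) : ¬ ApproxBot L u [] := fun h => h.1 rfl

theorem ApproxBot.append {u s : List A} (h : ApproxBot L u s) (t : List A) :
    ApproxBot L u (s ++ t) :=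
  ⟨fun hst => h.1 (List.append_eq_nil_iff.mp hst).1, fun z hz =>
    by simpa using h.2 (t ++ z) (by simpa using hz)⟩

theorem not_approxBot_of_append {u s t : List A} (h : ¬ ApproxBot L u (s ++ t)) :
    ¬ ApproxBot L u s :=
  fun hs => h (hs.append t)

theorem not_approxBot_of_prefix {u s t : List A} (hst : s <+: t) (h : ¬ ApproxBot L u t) :
    ¬ ApproxBot L u s := by
  obtain ⟨r, rfl⟩ := hst
  exact not_approxBot_of_append h

theorem ApproxBot.of_simL {u u' s : List A} (h : ApproxBot L u s) (hu : SimL L u u') :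
    ApproxBot L u' s := by
  refine ⟨h.1, fun z hz hmem => h.2 z ?_ ((hu _).2 hmem)⟩
  have hz' := (hu.append_right (s ++ z)).trans ((List.append_assoc _ _ _ ▸ hz).trans hu.symm)
  simpa using hz'

theorem approxBot_congr {u u' s : List A} (hu : SimL L u u') :
    ApproxBot L u s ↔ ApproxBot L u' s :=
  ⟨fun h => h.of_simL hu, fun h => h.of_simL hu.symm⟩

theorem ApproxBot.of_append_left {u q s : List A} (h : ApproxBot L (u ++ q) s) :
    ApproxBot L u (q ++ s) := by
  refine ⟨fun hqs => h.1 (List.append_eq_nil_iff.mp hqs).2, fun z hz hmem => ?_⟩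
  refine h.2 (z ++ q) (by simpa using hz.append_right q) ?_
  have hrot := appW_iterW_rotate (a := q) (b := s ++ z) (by simp [h.1])
  simp only [List.append_assoc] at hrot
  simpa [upW, appW_append, hrot] using hmem

theorem not_approxBot_move {u q s : List A} (h : ¬ ApproxBot L u (q ++ s)) :
    ¬ ApproxBot L (u ++ q) s :=
  fun hs => h hs.of_append_left

theorem not_approxBot_repCat {u w : List A} (hloop : SimL L (u ++ w) u) (hw : upW u w ∈ L)
    (n : ℕ) : ¬ ApproxBot L u (repCat w n) := by
  cases n with
  | zero => exact not_approxBot_nil u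
  | succ n =>
    refine not_approxBot_iff.mpr (Or.inr ⟨[], ?_, ?_⟩)
    · simpa using hloop.append_repCat (n + 1)
    · simpa [upW, iterW_repCat] using hw

theorem exists_loop_of_not_approxBot {u s : List A} (h : ¬ ApproxBot L u s) :
    ∃ r, SimL L (u ++ s ++ r) u ∧ ∀ n, ¬ ApproxBot L u (repCat (s ++ r) n) := by
  rcases not_approxBot_iff.mp h with rfl | ⟨z, hz, hmem⟩
  · exact ⟨[], by simpa using SimL.refl u, fun n => by simpa [repCat_nil] using not_approxBot_nil u⟩
  · exact ⟨z, hz, not_approxBot_repCat (by simpa using hz) hmem⟩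

theorem mem_sfl {u v t : List A} : t ∈ Sfl L u v ↔ ¬ ApproxBot L u (v ++ t) := Iff.rfl

theorem nil_mem_sfl {u v : List A} : [] ∈ Sfl L u v ↔ ¬ ApproxBot L u v := by
  rw [mem_sfl, List.append_nil]

theorem sfl_append (u v w : List A) : Sfl L u (v ++ w) = (w ++ ·) ⁻¹' Sfl L u v := by
  ext t
  simp [mem_sfl]

theorem sfl_congr {u u' : List A} (hu : SimL L u u') (v : List A) : Sfl L u v = Sfl L u' v := by
  ext t
  exact not_congr (approxBot_congr hu)

theorem mem_sfl_of_prefix {u v t t' : List A} (htt' : t' <+: t) (h : t ∈ Sfl L u v) :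
    t' ∈ Sfl L u v :=
  not_approxBot_of_prefix (List.prefix_append_right_inj v |>.mpr htt') h

theorem sfl_subset_of_simL {a b x : List A} (h : SimL L (a ++ b) x) (Y : List A) :
    Sfl L a (b ++ Y) ⊆ Sfl L x Y := by
  intro t ht
  rw [mem_sfl, ← approxBot_congr h]
  rw [mem_sfl, List.append_assoc] at ht
  exact not_approxBot_move ht

namespace EquivL

theorem symm {u v u' v' : List A} (h : EquivL L u v u' v') : EquivL L u' v' u v :=
  ⟨h.1.symm, h.2.symm⟩

theorem append {x y x' y' : List A} (h : EquivL L x y x' y') (z : List A) :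
    EquivL L x (y ++ z) x' (y' ++ z) :=
  ⟨by simpa using h.1.append_right z, by rw [sfl_append, sfl_append, h.2]⟩

end EquivL

end Semantics

namespace CoBuchi.Det

variable {A Q : Type} (step : Q → A → Rk × Q)

def stateAt (q : Q) (α : ℕ → A) : ℕ → Q
  | 0 => q
  | n + 1 => (step (stateAt q α n) (α n)).2

def rankAt (q : Q) (α : ℕ → A) (n : ℕ) : Rk := (step (stateAt step q α n) (α n)).1

def AccFrom (q : Q) (α : ℕ → A) : Prop := ∃ N, ∀ n, N ≤ n → rankAt step q α n = Rk.two

def dest (q : Q) (u : List A) : Q := u.foldl (fun p a => (step p a).2) q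

def SafeFrom : Q → List A → Prop
  | _, [] => True
  | q, a :: u => (step q a).1 = Rk.two ∧ SafeFrom (step q a).2 u

variable {step}

theorem dest_append (q : Q) (u v : List A) : dest step q (u ++ v) = dest step (dest step q u) v :=
  List.foldl_append

theorem dest_repCat (q : Q) (s : List A) (n : ℕ) :
    dest step q (repCat s n) = (fun p => dest step p s)^[n] q := by
  induction n generalizing q with
  | zero => rfl
  | succ n ih => rw [repCat_succ, dest_append, ih, Function.iterate_succ_apply]

theorem safeFrom_append (q : Q) (u v : List A) :
    SafeFrom step q (u ++ v) ↔ SafeFrom step q u ∧ SafeFrom step (dest step q u) v := by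
  induction u generalizing q with
  | nil => simp [SafeFrom, dest]
  | cons a u ih => simp only [List.cons_append, SafeFrom, ih, dest, List.foldl_cons, and_assoc]

theorem safeFrom_repCat {q : Q} {s : List A}
    (h : ∀ m, SafeFrom step ((fun p => dest step p s)^[m] q) s) (n : ℕ) : SafeFrom step q (repCat s n) := by
  induction n generalizing q with
  | zero => trivial
  | succ n ih =>
    rw [repCat_succ, safeFrom_append]
    exact ⟨h 0, ih fun m => h (m + 1)⟩

theorem stateAt_succ (q : Q) (α : ℕ → A) (n : ℕ) :
    stateAt step q α (n + 1) = stateAt step (step q (α 0)).2 (fun i => α (i + 1)) n := by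
  induction n with
  | zero => rfl
  | succ n ih => rw [stateAt, ih]; rfl

theorem rankAt_succ (q : Q) (α : ℕ → A) (n : ℕ) :
    rankAt step q α (n + 1) = rankAt step (step q (α 0)).2 (fun i => α (i + 1)) n := by
  rw [rankAt, stateAt_succ]
  rfl

theorem rankAt_appW (q : Q) (u : List A) (α : ℕ → A) (n : ℕ) :
    rankAt step q (appW u α) (u.length + n) = rankAt step (dest step q u) α n := by
  induction u generalizing q with
  | nil => rw [appW_nil, List.length_nil, Nat.zero_add]; rfl
  | cons a u ih =>
    rw [List.length_cons, Nat.add_right_comm, rankAt_succ, appW_cons_succ, ih]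
    simp [appW, dest]

theorem accFrom_appW (q : Q) (u : List A) (α : ℕ → A) :
    AccFrom step q (appW u α) ↔ AccFrom step (dest step q u) α := by
  constructor
  · rintro ⟨N, hN⟩
    exact ⟨N, fun n hn => rankAt_appW q u α n ▸ hN _ (by omega)⟩
  · rintro ⟨N, hN⟩
    refine ⟨u.length + N, fun n hn => ?_⟩
    obtain ⟨i, rfl⟩ := Nat.exists_eq_add_of_le (le_trans (Nat.le_add_right _ _) hn)
    exact (rankAt_appW q u α i).symm ▸ hN i (by omega)

theorem safeFrom_iff_rankAt (q : Q) (u : List A) (α : ℕ → A) :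
    SafeFrom step q u ↔ ∀ n < u.length, rankAt step q (appW u α) n = Rk.two := by
  induction u generalizing q with
  | nil => simp [SafeFrom]
  | cons a u ih =>
    rw [List.length_cons, Nat.forall_lt_succ_left]
    simp only [SafeFrom, rankAt_succ, appW_cons_succ, ← ih]
    simp [rankAt, stateAt, appW]

theorem accFrom_iterW [Nonempty A] (q : Q) {s : List A} (hs : s ≠ []) :
    AccFrom step q (iterW s) ↔ ∃ k, ∀ m, SafeFrom step ((fun p => dest step p s)^[k + m] q) s := by
  have hpos : 0 < s.length := List.length_pos_iff.mpr hs
  constructor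
  · rintro ⟨N, hN⟩
    refine ⟨N, fun m => ?_⟩
    rw [safeFrom_iff_rankAt _ _ (iterW s), appW_iterW hs, ← dest_repCat]
    intro i _
    rw [← rankAt_appW, appW_repCat_iterW]
    refine hN _ ?_
    have := Nat.le_mul_of_pos_right (N + m) hpos
    rw [repCat_length]
    omega
  · rintro ⟨k, hk⟩
    refine ⟨(repCat s k).length, fun n hn => ?_⟩
    obtain ⟨i, rfl⟩ := Nat.exists_eq_add_of_le hn
    have hsafe : SafeFrom step (dest step q (repCat s k)) (repCat s (i + 1)) := by
      refine safeFrom_repCat (fun m => ?_) _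
      rw [dest_repCat, ← Function.iterate_add_apply, Nat.add_comm]
      exact hk m
    have hi : i < (repCat s (i + 1)).length := by
      rw [repCat_length]
      have := Nat.le_mul_of_pos_right (i + 1) hpos
      omega
    have := (safeFrom_iff_rankAt _ _ (iterW s)).mp hsafe i hi
    rwa [appW_repCat_iterW, ← rankAt_appW, appW_repCat_iterW] at this

theorem _root_.CoBuchi.Deterministic.exists_step {M : CoBuchi A Q} (hdet : M.Deterministic) :
    ∃ (step : Q → A → Rk × Q) (q₀ : Q), ∀ α, α ∈ M.Lang ↔ AccFrom step q₀ α := by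
  choose step hstep using fun p a => (hdet.2 p a).exists
  obtain ⟨q₀, hq₀, hinit⟩ := hdet.1
  refine ⟨step, q₀, fun α => ⟨?_, fun hacc => ⟨q₀, hq₀, _, _, rfl, fun n => hstep _ _, hacc⟩⟩⟩
  rintro ⟨q, hq, ρ, r, hρ₀, hρ, N, hN⟩
  have htrans : ∀ n, (r n, ρ (n + 1)) = step (ρ n) (α n) :=
    fun n => (hdet.2 (ρ n) (α n)).unique (hρ n) (hstep _ _)
  have hstate : ∀ n, ρ n = stateAt step q₀ α n := by
    intro n
    induction n with
    | zero => exact hρ₀.trans (hinit q hq)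
    | succ n ih => rw [stateAt, ← ih, ← htrans]
  exact ⟨N, fun n hn => by
    rw [rankAt, ← hstate, ← htrans]
    exact hN n hn⟩

variable (step) in
def profile (s : List A) : Prop × (Q → Q × Prop) :=
  (s = [], fun p => (dest step p s, SafeFrom step p s))

variable {s s' : List A}

theorem eq_nil_iff_of_profile_eq (h : profile step s = profile step s') : s = [] ↔ s' = [] :=
  Iff.of_eq (congrArg Prod.fst h)

theorem dest_eq_of_profile_eq (h : profile step s = profile step s') (p : Q) :
    dest step p s = dest step p s' :=
  congrArg (fun P => (P.2 p).1) h

theorem safeFrom_eq_of_profile_eq (h : profile step s = profile step s') (p : Q) :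
    SafeFrom step p s = SafeFrom step p s' :=
  congrArg (fun P => (P.2 p).2) h

theorem profile_append (h : profile step s = profile step s') (t : List A) :
    profile step (s ++ t) = profile step (s' ++ t) := by
  simp only [profile, List.append_eq_nil_iff, dest_append, safeFrom_append,
    eq_nil_iff_of_profile_eq h, dest_eq_of_profile_eq h, safeFrom_eq_of_profile_eq h]

section Language

variable {L : Set (ℕ → A)} {q₀ : Q}

theorem appW_mem_iff (hL : ∀ α, α ∈ L ↔ AccFrom step q₀ α) (u : List A) (α : ℕ → A) :
    appW u α ∈ L ↔ AccFrom step (dest step q₀ u) α := by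
  rw [hL, accFrom_appW]

theorem simL_of_dest_eq (hL : ∀ α, α ∈ L ↔ AccFrom step q₀ α) {u u' : List A}
    (h : dest step q₀ u = dest step q₀ u') : SimL L u u' := fun α => by
  rw [appW_mem_iff hL, appW_mem_iff hL, h]

theorem upW_mem_iff_of_profile_eq [Nonempty A] (hL : ∀ α, α ∈ L ↔ AccFrom step q₀ α) {x x' : List A}
    (hx : dest step q₀ x = dest step q₀ x') (hs : s ≠ []) (h : profile step s = profile step s') :
    upW x s ∈ L ↔ upW x' s' ∈ L := by
  have hs' : s' ≠ [] := (eq_nil_iff_of_profile_eq h).not.mp hs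
  simp only [upW, appW_mem_iff hL, hx, accFrom_iterW _ hs, accFrom_iterW _ hs',
    dest_eq_of_profile_eq h, safeFrom_eq_of_profile_eq h]

theorem not_approxBot_of_profile_eq [Nonempty A] (hL : ∀ α, α ∈ L ↔ AccFrom step q₀ α)
    {x x' : List A}
    (hx : dest step q₀ x = dest step q₀ x') (h : profile step s = profile step s')
    (hs : ¬ ApproxBot L x s) : ¬ ApproxBot L x' s' := by
  by_cases hs' : s' = []
  · exact hs' ▸ not_approxBot_nil x'
  obtain ⟨z, hz, hmem⟩ :=
    (not_approxBot_iff.mp hs).resolve_left ((eq_nil_iff_of_profile_eq h).not.mpr hs')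
  refine not_approxBot_iff.mpr (Or.inr ⟨z, ?_, ?_⟩)
  · have hdest : dest step q₀ (x' ++ s' ++ z) = dest step q₀ (x ++ s ++ z) := by
      simp only [dest_append, hx, dest_eq_of_profile_eq h]
    exact (simL_of_dest_eq hL hdest).trans (hz.trans (simL_of_dest_eq hL hx))
  · have hne : s ++ z ≠ [] :=
      List.append_ne_nil_of_left_ne_nil ((eq_nil_iff_of_profile_eq h).not.mpr hs') z
    exact (upW_mem_iff_of_profile_eq hL hx hne (profile_append h z)).mp hmem

theorem sfl_subset_of_profile_eq [Nonempty A] (hL : ∀ α, α ∈ L ↔ AccFrom step q₀ α)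
    {x x' y y' : List A}
    (hx : dest step q₀ x = dest step q₀ x') (hy : profile step y = profile step y') :
    Sfl L x y ⊆ Sfl L x' y' :=
  fun t ht => not_approxBot_of_profile_eq hL hx (profile_append hy t) ht

end Language

end CoBuchi.Det

theorem sfl_range_finite {A : Type} [Nonempty A] {L : Set (ℕ → A)} (hrec : DCWRecognizable L) :
    (Set.range (Function.uncurry (Sfl L))).Finite := by
  obtain ⟨Q, hQ, M, hdet, rfl⟩ := hrec
  obtain ⟨step, q₀, hL⟩ := hdet.exists_step
  have hfac : (Function.uncurry (Sfl M.Lang)).FactorsThrough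
      fun p : List A × List A => (CoBuchi.Det.dest step q₀ p.1, CoBuchi.Det.profile step p.2) := by
    rintro ⟨x, y⟩ ⟨x', y'⟩ h
    obtain ⟨hx, hy⟩ := Prod.mk.inj h
    exact (CoBuchi.Det.sfl_subset_of_profile_eq hL hx hy).antisymm
      (CoBuchi.Det.sfl_subset_of_profile_eq hL hx.symm hy.symm)
  obtain ⟨e, he⟩ := (Function.factorsThrough_iff _).mp hfac
  rw [he]
  exact (Set.finite_range e).subset (Set.range_comp_subset_range _ e)

theorem exists_forall_of_finite_range {β : Type*} {f : ℕ → β} (hf : (Set.range f).Finite)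
    {P : ℕ → β → Prop} (hP : ∀ k, Antitone fun j => P j (f k)) (h : ∀ k, P k (f k)) :
    ∃ k₀, ∀ j, P j (f k₀) := by
  have : Finite (Set.range f) := hf.to_subtype
  obtain ⟨⟨_, k₀, rfl⟩, hk₀⟩ := Finite.exists_infinite_fiber (Set.rangeFactorization f)
  refine ⟨k₀, fun j => ?_⟩
  obtain ⟨k, hk, hjk⟩ := (Set.infinite_coe_iff.mp hk₀).exists_gt j
  have hfk : f k = f k₀ := congrArg Subtype.val hk
  exact hfk ▸ hP k hjk.le (h k)

section Pointed

variable {A : Type} [Nonempty A] {L : Set (ℕ → A)}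

theorem IsPointed.append {x y z : List A} (h : IsPointed L x y)
    (hz : ¬ ApproxBot L x (y ++ z)) : IsPointed L x (y ++ z) := by
  refine ⟨hz, fun u₁ u₂ hsim hnb => ?_⟩
  rw [← List.append_assoc] at hnb
  rw [← List.append_assoc, sfl_append, sfl_append, h.2 u₁ u₂ hsim (not_approxBot_of_append hnb)]

theorem IsPointed.equivL {u v x y : List A} (h : IsPointed L u v) (hsim : SimL L (x ++ y) u)
    (hy : ¬ ApproxBot L x (y ++ v)) : EquivL L u v x (y ++ v) :=
  ⟨by simpa using (hsim.append_right v).symm, h.2 x y hsim hy⟩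

/-- A `⊆`-minimal candidate safe language is pointed after some `w^k`: otherwise, by pigeonhole
over the finitely many safe languages, a strictly smaller candidate would keep every `w^j` safe. -/
theorem exists_isPointed_of_forall_repCat_mem
    (hfin : (Set.range (Function.uncurry (Sfl L))).Finite) {x Y w : List A}
    (hY : ∀ n, repCat w n ∈ Sfl L x Y) :
    ∃ x' m k, SimL L (x' ++ m) x ∧ IsPointed L x' (m ++ Y ++ repCat w k) ∧
      ∀ n, repCat w n ∈ Sfl L x' (m ++ Y) := by
  let C : Set (List A × List A) :=
    {p | SimL L (p.1 ++ p.2) x ∧ ∀ n, repCat w n ∈ Sfl L p.1 (p.2 ++ Y)}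
  have hCfin : ((fun p : List A × List A => Sfl L p.1 (p.2 ++ Y)) '' C).Finite :=
    hfin.subset (by rintro _ ⟨p, -, rfl⟩; exact ⟨(p.1, p.2 ++ Y), rfl⟩)
  obtain ⟨⟨x', m⟩, ⟨hsim, hgood⟩, hmin⟩ :=
    Set.Finite.exists_minimalFor' _ C hCfin ⟨(x, []), by simpa using SimL.refl x, hY⟩
  suffices ∃ k, IsPointed L x' (m ++ Y ++ repCat w k) from
    let ⟨k, hk⟩ := this; ⟨x', m, k, hsim, hk, hgood⟩
  by_contra! hnot
  have hshrink : ∀ k, ∃ a b, SimL L (a ++ b) x' ∧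
      ¬ ApproxBot L a (b ++ (m ++ Y ++ repCat w k)) ∧
      Sfl L x' (m ++ Y ++ repCat w k) ≠ Sfl L a (b ++ (m ++ Y ++ repCat w k)) := by
    intro k
    by_contra! hk
    exact hnot k ⟨hgood k, hk⟩
  choose a b hab hnb hne using hshrink
  obtain ⟨k₀, hk₀⟩ := exists_forall_of_finite_range (f := fun k => Sfl L (a k) (b k ++ (m ++ Y)))
    (P := fun j S => repCat w j ∈ S)
    (hfin.subset (by rintro _ ⟨k, rfl⟩; exact ⟨(a k, b k ++ (m ++ Y)), rfl⟩))
    (fun k i j hij hj => mem_sfl_of_prefix (repCat_prefix w hij) hj)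
    (fun k => by simpa [mem_sfl] using hnb k)
  have hsub : Sfl L (a k₀) (b k₀ ++ (m ++ Y)) ⊆ Sfl L x' (m ++ Y) := sfl_subset_of_simL (hab k₀) _
  have hmem : (a k₀, b k₀ ++ m) ∈ C :=
    ⟨by simpa using (hab k₀).append_right m |>.trans hsim, by simpa using hk₀⟩
  have hsup : Sfl L x' (m ++ Y) ⊆ Sfl L (a k₀) (b k₀ ++ (m ++ Y)) := by
    simpa using hmin hmem (by simpa using hsub)
  apply hne k₀
  rw [← List.append_assoc (b k₀), sfl_append x', sfl_append (a k₀), hsub.antisymm hsup]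

theorem exists_isPointed_simL (hfin : (Set.range (Function.uncurry (Sfl L))).Finite)
    (u : List A) : ∃ x y, IsPointed L x y ∧ SimL L (x ++ y) u := by
  obtain ⟨x, m, k, hsim, hpt, -⟩ := exists_isPointed_of_forall_repCat_mem hfin (Y := []) (w := [])
    (fun n => by simpa [repCat_nil, mem_sfl] using not_approxBot_nil u)
  exact ⟨x, m, by simpa [repCat_nil] using hpt, hsim⟩

theorem exists_isPointed_support (hfin : (Set.range (Function.uncurry (Sfl L))).Finite)
    {u u₁ u₂ v : List A} (hsim : SimL L (u₁ ++ u₂) u) (hv : ¬ ApproxBot L u₁ (u₂ ++ v)) :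
    ∃ x y, IsPointed L x y ∧ SimL L (x ++ y) u ∧ ¬ ApproxBot L x (y ++ v) ∧
      Sfl L x (y ++ v) ⊆ Sfl L u₁ (u₂ ++ v) := by
  obtain ⟨r, hloop, hpow⟩ := exists_loop_of_not_approxBot hv
  have hloop₁ : SimL L (u₁ ++ (u₂ ++ v ++ r)) u₁ := by simpa using hloop
  have hloop₂ : SimL L (u₁ ++ u₂ ++ (v ++ r ++ u₂)) (u₁ ++ u₂) := by
    simpa using hloop.append_right u₂
  have hrot := append_repCat_comm u₂ (v ++ r)
  have hY : ∀ n, repCat (v ++ r ++ u₂) n ∈ Sfl L u₁ u₂ := fun n => by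
    rw [mem_sfl, hrot]
    refine not_approxBot_of_prefix ?_ (hpow (n + 1))
    simp [repCat_succ']
  obtain ⟨x, m, k, hxm, hpt, hgood⟩ := exists_isPointed_of_forall_repCat_mem hfin hY
  refine ⟨x, m ++ u₂ ++ repCat (v ++ r ++ u₂) k, hpt, ?_, ?_, ?_⟩
  · simpa using ((hxm.append_right u₂).append_right _).trans ((hloop₂.append_repCat k).trans hsim)
  · refine not_approxBot_of_prefix ?_ (hgood (k + 1))
    simp [repCat_succ']
  · calc Sfl L x (m ++ u₂ ++ repCat (v ++ r ++ u₂) k ++ v)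
        ⊆ Sfl L u₁ (u₂ ++ repCat (v ++ r ++ u₂) k ++ v) := by
          simpa using sfl_subset_of_simL hxm (u₂ ++ repCat (v ++ r ++ u₂) k ++ v)
      _ = Sfl L u₁ (repCat (u₂ ++ v ++ r) k ++ (u₂ ++ v)) := by
          rw [hrot]
          simp
      _ ⊆ Sfl L (u₁ ++ repCat (u₂ ++ v ++ r) k) (u₂ ++ v) := sfl_subset_of_simL (SimL.refl _) _
      _ = Sfl L u₁ (u₂ ++ v) := sfl_congr (hloop₁.append_repCat k) _

end Pointed

theorem CoBuchi.Reach.append {A Q : Type} {M : CoBuchi A Q} {p q r : Q} {u v : List A}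
    (h₁ : M.Reach p u q) (h₂ : M.Reach q v r) : M.Reach p (u ++ v) r := by
  induction u generalizing p with
  | nil => exact (show p = q from h₁) ▸ h₂
  | cons a u ih =>
    obtain ⟨rk, p₁, hp, hr⟩ := h₁
    exact ⟨rk, p₁, hp, ih hr⟩

section Canonical

variable {A : Type} [Nonempty A] {L : Set (ℕ → A)}

theorem cls_eq_iff {x y x' y' : List A} {h : IsPointed L x y} {h' : IsPointed L x' y'} :
    cls L x y h = cls L x' y' h' ↔ EquivL L x y x' y' :=
  Quotient.eq

theorem cls_congr_right {x y y' : List A} (e : y = y') (h : IsPointed L x y)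
    (h' : IsPointed L x y') : cls L x y h = cls L x y' h' := by
  subst e
  rfl

theorem exists_eq_cls (p : CanonState L) : ∃ x y h, p = cls L x y h := by
  obtain ⟨⟨⟨x, y⟩, h⟩, rfl⟩ := Quotient.exists_rep p
  exact ⟨x, y, h, rfl⟩

variable {x y : List A} {h : IsPointed L x y}

theorem cls_mem_init_iff : cls L x y h ∈ (canonAut L).init ↔ SimL L (x ++ y) [] :=
  ⟨fun ⟨_, _, _, he, hsim⟩ => (cls_eq_iff.mp he).1.trans hsim, fun hsim => ⟨x, y, h, rfl, hsim⟩⟩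

theorem cls_mem_delta_two_iff {a : A} {p : CanonState L} :
    (cls L x y h, a, Rk.two, p) ∈ (canonAut L).delta ↔ ∃ h', p = cls L x (y ++ [a]) h' := by
  constructor
  · intro hd
    simp only [canonAut, Set.mem_ofPred_eq] at hd
    rcases hd with ⟨x', y', _, _, hnb, he, -, hp⟩ | ⟨-, -, -, -, -, -, -, -, hrk, -⟩
    · have hequiv := (cls_eq_iff.mp he).symm.append [a]
      have hnb' : ¬ ApproxBot L x (y ++ [a]) := nil_mem_sfl.mp (hequiv.2 ▸ nil_mem_sfl.mpr hnb)
      exact ⟨h.append hnb', hp.trans (cls_eq_iff.mpr hequiv)⟩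
    · cases hrk
  · rintro ⟨h', rfl⟩
    exact Or.inl ⟨x, y, h, h', h'.1, rfl, rfl, rfl⟩

theorem cls_mem_delta_one {a : A} {x' y' : List A} {h' : IsPointed L x' y'}
    (hsim : SimL L (x ++ y ++ [a]) (x' ++ y')) :
    (cls L x y h, a, Rk.one, cls L x' y' h') ∈ (canonAut L).delta :=
  Or.inr ⟨x, y, x', y', h, h', hsim, rfl, rfl, rfl⟩

theorem simL_of_cls_mem_delta {a : A} {r : Rk} {x' y' : List A} {h' : IsPointed L x' y'}
    (hd : (cls L x y h, a, r, cls L x' y' h') ∈ (canonAut L).delta) :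
    SimL L (x ++ y ++ [a]) (x' ++ y') := by
  simp only [canonAut, Set.mem_ofPred_eq] at hd
  rcases hd with ⟨x₁, y₁, _, _, -, he, -, he'⟩ | ⟨x₁, y₁, x₂, y₂, _, _, hsim, he, -, he'⟩
  · exact ((cls_eq_iff.mp he).1.append_right [a]).trans
      (List.append_assoc x₁ y₁ [a] ▸ (cls_eq_iff.mp he').1.symm)
  · exact (((cls_eq_iff.mp he).1.append_right [a]).trans hsim).trans (cls_eq_iff.mp he').1.symm

theorem safeReach_cls_iff {v : List A} {q : CanonState L} :
    (canonAut L).SafeReach (cls L x y h) v q ↔ ∃ h', q = cls L x (y ++ v) h' := by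
  induction v generalizing y with
  | nil =>
    refine ⟨fun e => ⟨by simpa using h, by rw [← e]; exact cls_congr_right (by simp) _ _⟩, ?_⟩
    rintro ⟨h', rfl⟩
    exact cls_congr_right (by simp) _ _
  | cons a v ih =>
    constructor
    · rintro ⟨p, hp, hr⟩
      obtain ⟨h₁, rfl⟩ := cls_mem_delta_two_iff.mp hp
      obtain ⟨h', rfl⟩ := ih.mp hr
      exact ⟨by simpa using h', cls_congr_right (by simp) _ _⟩
    · rintro ⟨h', rfl⟩
      have h₁ : IsPointed L x (y ++ [a]) :=
        h.append (not_approxBot_of_prefix (by simp) h'.1)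
      exact ⟨_, cls_mem_delta_two_iff.mpr ⟨h₁, rfl⟩,
        ih.mpr ⟨by simpa using h', cls_congr_right (by simp) _ _⟩⟩

theorem simL_of_reach_cls {w x' y' : List A} {h' : IsPointed L x' y'}
    (hr : (canonAut L).Reach (cls L x y h) w (cls L x' y' h')) :
    SimL L (x ++ y ++ w) (x' ++ y') := by
  induction w generalizing x y with
  | nil => simpa using (cls_eq_iff.mp hr).1
  | cons a w ih =>
    obtain ⟨r, p, hp, hr⟩ := hr
    obtain ⟨x₁, y₁, h₁, rfl⟩ := exists_eq_cls p
    simpa using ((simL_of_cls_mem_delta hp).append_right w).trans (ih hr)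

theorem exists_reach_cls (hfin : (Set.range (Function.uncurry (Sfl L))).Finite) {u : List A}
    (hsim : SimL L (x ++ y) u) :
    ∃ p₀ ∈ (canonAut L).init, (canonAut L).Reach p₀ u (cls L x y h) := by
  induction u using List.reverseRecOn generalizing x y with
  | nil => exact ⟨_, cls_mem_init_iff.mpr hsim, rfl⟩
  | append_singleton u a ih =>
    obtain ⟨x₁, y₁, h₁, hsim₁⟩ := exists_isPointed_simL hfin u
    obtain ⟨p₀, hp₀, hr⟩ := ih (h := h₁) hsim₁
    exact ⟨p₀, hp₀, hr.append
      ⟨Rk.one, _, cls_mem_delta_one ((hsim₁.append_right [a]).trans hsim.symm), rfl⟩⟩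

theorem exists_of_mem_theta {u v : List A} {q : CanonState L} (hq : q ∈ theta L u v) :
    ∃ x y, IsPointed L x y ∧ SimL L (x ++ y) u ∧ ∃ h', q = cls L x (y ++ v) h' := by
  obtain ⟨p₀, hp₀, p, hr, hs⟩ := hq
  obtain ⟨x₀, y₀, h₀, rfl⟩ := exists_eq_cls p₀
  obtain ⟨x, y, h, rfl⟩ := exists_eq_cls p
  have hinit : SimL L (x₀ ++ y₀ ++ u) u := by
    simpa using (cls_mem_init_iff.mp hp₀).append_right u
  exact ⟨x, y, h, (simL_of_reach_cls hr).symm.trans hinit, safeReach_cls_iff.mp hs⟩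

theorem cls_append_mem_theta (hfin : (Set.range (Function.uncurry (Sfl L))).Finite)
    {u v : List A} (hsim : SimL L (x ++ y) u) (hv : ¬ ApproxBot L x (y ++ v)) :
    cls L x (y ++ v) (h.append hv) ∈ theta L u v :=
  let ⟨p₀, hp₀, hr⟩ := exists_reach_cls hfin (h := h) hsim
  ⟨p₀, hp₀, _, hr, safeReach_cls_iff.mpr ⟨_, rfl⟩⟩

end Canonical

section Theta

variable {A : Type} [Nonempty A] {L : Set (ℕ → A)}

theorem exists_cls_mem_theta_of_mem_sfl (hfin : (Set.range (Function.uncurry (Sfl L))).Finite)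
    {u v t : List A} (ht : t ∈ Sfl L u v) :
    ∃ x y h, cls L x y h ∈ theta L u v ∧ t ∈ Sfl L x y := by
  obtain ⟨x, y, h, hsim, hvt, -⟩ :=
    exists_isPointed_support hfin (u₂ := []) (v := v ++ t) (by simpa using SimL.refl u) ht
  have hv : ¬ ApproxBot L x (y ++ v) := not_approxBot_of_append (by simpa using hvt)
  exact ⟨x, y ++ v, h.append hv, cls_append_mem_theta hfin (h := h) hsim hv,
    by simpa [mem_sfl] using hvt⟩

theorem exists_cls_mem_theta_sfl_subset (hfin : (Set.range (Function.uncurry (Sfl L))).Finite)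
    {u u₁ u₂ v : List A} (hsim : SimL L (u₁ ++ u₂) u) (hv : ¬ ApproxBot L u₁ (u₂ ++ v)) :
    ∃ x y h, cls L x y h ∈ theta L u v ∧ Sfl L x y ⊆ Sfl L u₁ (u₂ ++ v) := by
  obtain ⟨x, y, h, hsim', hv', hsub⟩ := exists_isPointed_support hfin hsim hv
  exact ⟨x, y ++ v, h.append hv', cls_append_mem_theta hfin (h := h) hsim' hv', hsub⟩

theorem theta_eq_singleton_of_isPointed (hfin : (Set.range (Function.uncurry (Sfl L))).Finite)
    {u v : List A} (hpt : IsPointed L u v) : theta L u v = {cls L u v hpt} := by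
  have hsub : ∀ q ∈ theta L u v, q = cls L u v hpt := by
    intro q hq
    obtain ⟨x, y, -, hsim, h', rfl⟩ := exists_of_mem_theta hq
    exact cls_eq_iff.mpr (hpt.equivL hsim h'.1).symm
  obtain ⟨x, y, h, hq, -⟩ := exists_cls_mem_theta_of_mem_sfl hfin (nil_mem_sfl.mpr hpt.1)
  exact Set.eq_singleton_iff_unique_mem.mpr ⟨hsub _ hq ▸ hq, hsub⟩

theorem isPointed_of_theta_eq_singleton
    (hfin : (Set.range (Function.uncurry (Sfl L))).Finite) {u v : List A} {q : CanonState L}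
    (hθ : theta L u v = {q}) : IsPointed L u v := by
  have hcls : ∀ {x y h}, cls L x y h ∈ theta L u v → cls L x y h = q := fun hq => by rwa [hθ] at hq
  obtain ⟨x, y, -, hsim, h', -⟩ := exists_of_mem_theta (hθ ▸ rfl : q ∈ theta L u v)
  refine ⟨(approxBot_congr hsim).not.mp (not_approxBot_move h'.1), fun u₁ u₂ h12 hv => ?_⟩
  refine Set.Subset.antisymm (fun t ht => ?_) (sfl_subset_of_simL h12 v)
  obtain ⟨xA, yA, hA, hqA, htA⟩ := exists_cls_mem_theta_of_mem_sfl hfin ht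
  obtain ⟨xB, yB, hB, hqB, hsubB⟩ := exists_cls_mem_theta_sfl_subset hfin h12 hv
  exact hsubB ((cls_eq_iff.mp ((hcls hqA).trans (hcls hqB).symm)).2 ▸ htA)

end Theta

theorem stmt16_general {A : Type} [Nonempty A] (L : Set (ℕ → A))
    (hrec : DCWRecognizable L) (u v : List A) :
    (∃ q : CanonState L, theta L u v = {q}) ↔ IsPointed L u v := by
  have hfin := sfl_range_finite hrec
  exact ⟨fun ⟨_, hθ⟩ => isPointed_of_theta_eq_singleton hfin hθ,
    fun hpt => ⟨_, theta_eq_singleton_of_isPointed hfin hpt⟩⟩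

/-- `θ(u,v)` is a singleton iff `(u,v)` is pointed. -/
theorem stmt16 {A : Type} [Nonempty A] [Fintype A] (L : Set (ℕ → A))
    (hrec : DCWRecognizable L) (u v : List A) :
    (∃ q : CanonState L, theta L u v = {q}) ↔ IsPointed L u v :=
  stmt16_general L hrec u v
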